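/- arXiv:1911.07469 — 3 statements merged into one kernel-verified Lean document; each statement's English description precedes it below -/
import Mathlib

section
/- For every Fitch map ε the ε-tree T_ε = (T̂, λ̂) is, up to isomorphism, the unique least-resolved edge-labeled tree explaining ε; moreover T̂ has the minimum number of vertices and minimizes ∑_{e ∈ E(T̂)} |λ̂(e)| over all edge-labeled trees explaining ε. -/
/-- A finite rooted phylogenetic tree on leaf set `X`, with vertex type `V`.
Vertices are encoded via a parent function; `par root = root`. -/
structure PhyloTree (V X : Type) : Type where
  fin : Finite V
  root : V
  par : V → V
  par_root : par root = root
  reach : ∀ v : V, ∃ n : ℕ, par^[n] v = root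
  leaf : X → V
  leaf_inj : Function.Injective leaf
  leaf_isLeaf : ∀ (x : X) (u : V), par u = leaf x → u = leaf x
  leaf_only : ∀ v : V, (∀ u : V, par u = v → u = v) → ∃ x : X, leaf x = v
  root_deg : (∃ x : X, leaf x = root) ∨ 2 ≤ {u : V | par u = root ∧ u ≠ root}.ncard
  inner_deg : ∀ v : V, v ≠ root → (¬ ∃ x : X, leaf x = v) →
      2 ≤ {u : V | par u = v ∧ u ≠ v}.ncard

namespace PhyloTree

variable {V X : Type}

/-- `T.anc u v` : `u` is an ancestor of `v`, i.e. `u ⪯_T v`. -/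
def anc (T : PhyloTree V X) (u v : V) : Prop := ∃ n : ℕ, T.par^[n] v = u

/-- `l` is the last common ancestor of `a` and `b`. -/
def IsLca (T : PhyloTree V X) (l a b : V) : Prop :=
  T.anc l a ∧ T.anc l b ∧ ∀ u : V, T.anc u a → T.anc u b → T.anc u l

/-- The cluster of `v`: the set of leaves below `v`. -/
def cluster (T : PhyloTree V X) (v : V) : Set X := {x : X | T.anc v (T.leaf x)}

/-- The cluster set `C(T)`. -/
def clusterSet (T : PhyloTree V X) : Set (Set X) := {S : Set X | ∃ v : V, S = T.cluster v}

/-- The edge `(par u, u)` lies on the descending path from `a` down to `b`. -/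
def edgeOnDown (T : PhyloTree V X) (a b u : V) : Prop :=
  T.anc a u ∧ u ≠ a ∧ T.anc u b

/-- The edge `(par u, u)` lies on the unique path between `v` and `w`. -/
def edgeOnPath (T : PhyloTree V X) (v w u : V) : Prop :=
  ∃ l : V, T.IsLca l v w ∧ (T.edgeOnDown l v u ∨ T.edgeOnDown l w u)

/-- `T` displays the rooted triple `ab|c`. -/
def Displays (T : PhyloTree V X) (a b c : X) : Prop :=
  ∃ l3 l2 : V, T.IsLca l2 (T.leaf a) (T.leaf b) ∧
    T.IsLca l3 l2 (T.leaf c) ∧ l3 ≠ l2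

end PhyloTree

/-- `(T, lab)` explains `ε` : for distinct leaves `x,y`, `m ∈ ε x y` iff there is an
`m`-edge on the path from `lca(x,y)` down to `y`. -/
def Explains {V X M : Type} (T : PhyloTree V X) (lab : V → Set M)
    (ε : X → X → Set M) : Prop :=
  ∀ x y : X, x ≠ y → ∀ m : M,
    (m ∈ ε x y ↔ ∃ l : V, T.IsLca l (T.leaf x) (T.leaf y) ∧
      ∃ u : V, T.edgeOnDown l (T.leaf y) u ∧ m ∈ lab u)

/-- `ε` is a Fitch map: it is explained by some edge-labeled phylogenetic tree. -/
def IsFitchMap {X M : Type} (ε : X → X → Set M) : Prop :=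
  ∃ (V : Type) (T : PhyloTree V X) (lab : V → Set M), Explains T lab ε

/-- The complementary neighborhood `N_{¬m}[y]`. -/
def Nbr {X M : Type} (ε : X → X → Set M) (m : M) (y : X) : Set X :=
  {x : X | x ≠ y ∧ m ∉ ε x y} ∪ {y}

/-- The collection `N[ε]` of all complementary neighborhoods. -/
def NbrSet {X M : Type} (ε : X → X → Set M) : Set (Set X) :=
  {N : Set X | ∃ (m : M) (y : X), N = Nbr ε m y}

/-- A set system is hierarchy-like if any two members intersect in `∅` or one of them. -/
def HLike {X : Type} (H : Set (Set X)) : Prop :=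
  ∀ P ∈ H, ∀ Q ∈ H, P ∩ Q = P ∨ P ∩ Q = Q ∨ P ∩ Q = ∅

/-- The inequality condition (IC). -/
def IneqCond {X M : Type} (ε : X → X → Set M) : Prop :=
  ∀ (m : M) (y y' : X), y' ∈ Nbr ε m y → (Nbr ε m y').ncard ≤ (Nbr ε m y).ncard


/-- `(T, lab)` is (a representative of) the ε-tree `T_ε`. -/
def IsEpsTree {V X M : Type} (T : PhyloTree V X) (lab : V → Set M)
    (ε : X → X → Set M) : Prop :=
  T.clusterSet = NbrSet ε ∪ {Set.univ} ∪ {S : Set X | ∃ x : X, S = {x}} ∧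
  ∀ v : V, v ≠ T.root → lab v = {m : M | ∃ y : X, T.cluster v = Nbr ε m y}

/-- `(T', lab')` is a coarse-graining of `(T, lab)`. -/
def CoarseGraining {V' V X M : Type} (T' : PhyloTree V' X) (lab' : V' → Set M)
    (T : PhyloTree V X) (lab : V → Set M) : Prop :=
  T'.clusterSet ⊆ T.clusterSet ∧
  ∀ v' : V', v' ≠ T'.root → ∀ v : V, v ≠ T.root →
    T'.cluster v' = T.cluster v → lab' v' ⊆ lab v

/-- Strict coarse-graining. -/
def StrictCoarseGraining {V' V X M : Type} (T' : PhyloTree V' X) (lab' : V' → Set M)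
    (T : PhyloTree V X) (lab : V → Set M) : Prop :=
  CoarseGraining T' lab' T lab ∧
  (T'.clusterSet ⊂ T.clusterSet ∨
    ∃ v' : V', v' ≠ T'.root ∧ ∃ v : V, v ≠ T.root ∧
      T'.cluster v' = T.cluster v ∧ lab' v' ⊂ lab v)

/-- `(T, lab)` is least-resolved w.r.t. `ε`. -/
def LeastResolved {V X M : Type} (T : PhyloTree V X) (lab : V → Set M)
    (ε : X → X → Set M) : Prop :=
  Explains T lab ε ∧
  ∀ (V' : Type) (T' : PhyloTree V' X) (lab' : V' → Set M),
    StrictCoarseGraining T' lab' T lab → ¬ Explains T' lab' ε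

/-- Two edge-labeled trees are isomorphic iff each is a coarse-graining of the other. -/
def Isomorphic {V₁ V₂ X M : Type} (T₁ : PhyloTree V₁ X) (lab₁ : V₁ → Set M)
    (T₂ : PhyloTree V₂ X) (lab₂ : V₂ → Set M) : Prop :=
  CoarseGraining T₁ lab₁ T₂ lab₂ ∧ CoarseGraining T₂ lab₂ T₁ lab₁

/-- The sum of the sizes of the edge labels (edges are the pairs `(par v, v)`, `v ≠ root`). -/
noncomputable def edgeLabelSum {V X M : Type} (T : PhyloTree V X) (lab : V → Set M) : ℕ :=
  ∑ᶠ v ∈ {v : V | v ≠ T.root}, (lab v).ncard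



/-! ### Auxiliary infrastructure -/

namespace PhyloTree

variable {V X : Type} (T : PhyloTree V X)

lemma anc_refl (v : V) : T.anc v v := ⟨0, rfl⟩

lemma anc_par (v : V) : T.anc (T.par v) v := ⟨1, rfl⟩

lemma anc_trans {u v w : V} (h1 : T.anc u v) (h2 : T.anc v w) : T.anc u w := by
  obtain ⟨n, rfl⟩ := h1
  obtain ⟨m, rfl⟩ := h2
  exact ⟨n + m, Function.iterate_add_apply T.par n m w⟩

lemma iterate_root (n : ℕ) : T.par^[n] T.root = T.root :=
  Function.iterate_fixed T.par_root n

lemma anc_root (v : V) : T.anc T.root v := T.reach v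

lemma eq_root_of_anc {v : V} (h : T.anc v T.root) : v = T.root := by
  obtain ⟨n, hn⟩ := h
  rw [iterate_root] at hn
  exact hn.symm

lemma anc_antisymm {u v : V} (h1 : T.anc u v) (h2 : T.anc v u) : u = v := by
  obtain ⟨n, hn⟩ := h1
  obtain ⟨m, hm⟩ := h2
  rcases Nat.eq_zero_or_pos (m + n) with h0 | hpos
  · have : n = 0 := Nat.eq_zero_of_add_eq_zero_left h0
    rw [this] at hn
    exact hn.symm ▸ rfl
  · have hper : T.par^[m + n] v = v := by
      rw [Function.iterate_add_apply, hn, hm]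
    have hall : ∀ j : ℕ, T.par^[j * (m + n)] v = v := by
      intro j
      induction j with
      | zero => simp
      | succ j ih =>
        rw [Nat.succ_mul, Function.iterate_add_apply, hper, ih]
    obtain ⟨N, hN⟩ := T.reach v
    have hle : N ≤ N * (m + n) := Nat.le_mul_of_pos_right N hpos
    have hroot : T.par^[N * (m + n)] v = T.root := by
      have h2' := Function.iterate_add_apply T.par (N * (m + n) - N) N v
      rw [Nat.sub_add_cancel hle] at h2'
      rw [h2', hN, iterate_root]
    have hv : v = T.root := by rw [← hall N, hroot]
    have hu : u = T.root := by rw [← hn, hv, iterate_root]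
    rw [hu, hv]

lemma anc_comparable {u v w : V} (h1 : T.anc u w) (h2 : T.anc v w) :
    T.anc u v ∨ T.anc v u := by
  obtain ⟨n, hn⟩ := h1
  obtain ⟨m, hm⟩ := h2
  rcases le_total n m with h | h
  · right
    exact ⟨m - n, by
      rw [← hn, ← Function.iterate_add_apply, Nat.sub_add_cancel h, hm]⟩
  · left
    exact ⟨n - m, by
      rw [← hm, ← Function.iterate_add_apply, Nat.sub_add_cancel h, hn]⟩

lemma eq_leaf_of_anc {x : X} {w : V} (h : T.anc (T.leaf x) w) : w = T.leaf x := by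
  obtain ⟨n, hn⟩ := h
  induction n generalizing w with
  | zero => exact hn
  | succ n ih =>
    rw [Function.iterate_succ_apply] at hn
    exact T.leaf_isLeaf x w (ih hn)

lemma cluster_leaf (x : X) : T.cluster (T.leaf x) = {x} := by
  ext x'
  constructor
  · intro hx'
    exact T.leaf_inj (T.eq_leaf_of_anc hx')
  · rintro rfl
    exact T.anc_refl _

lemma cluster_root : T.cluster T.root = Set.univ :=
  Set.eq_univ_of_forall fun x => T.anc_root _

lemma cluster_mono {u v : V} (h : T.anc u v) : T.cluster v ⊆ T.cluster u :=
  fun _ hx => T.anc_trans h hx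

lemma exists_leaf_below (v : V) : ∃ x : X, T.anc v (T.leaf x) := by
  have _hfin := T.fin
  suffices H : ∀ (n : ℕ) (v : V), {w : V | T.anc v w}.ncard ≤ n →
      ∃ x : X, T.anc v (T.leaf x) by
    exact H _ v le_rfl
  intro n
  induction n with
  | zero =>
    intro v hv
    exfalso
    have h1 : v ∈ {w : V | T.anc v w} := T.anc_refl v
    have : 0 < {w : V | T.anc v w}.ncard :=
      (Set.ncard_pos (Set.toFinite _)).mpr ⟨v, h1⟩
    omega
  | succ n ih =>
    intro v hv
    by_cases hl : ∀ u : V, T.par u = v → u = v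
    · obtain ⟨x, hx⟩ := T.leaf_only v hl
      exact ⟨x, hx ▸ T.anc_refl v⟩
    · push_neg at hl
      obtain ⟨u, hpu, hne⟩ := hl
      have hvu : T.anc v u := ⟨1, by simpa using hpu⟩
      have hss : {w : V | T.anc u w} ⊂ {w : V | T.anc v w} := by
        constructor
        · intro w hw
          exact T.anc_trans hvu hw
        · intro hsub
          have : T.anc u v := hsub (T.anc_refl v)
          exact hne (T.anc_antisymm this hvu)
      have hlt : {w : V | T.anc u w}.ncard < {w : V | T.anc v w}.ncard :=
        Set.ncard_lt_ncard hss (Set.toFinite _)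
      obtain ⟨x, hx⟩ := ih u (by omega)
      exact ⟨x, T.anc_trans hvu hx⟩

lemma exists_child_anc {v w : V} (h : T.anc v w) (hne : w ≠ v) :
    ∃ c : V, T.par c = v ∧ c ≠ v ∧ T.anc c w := by
  classical
  have hex : ∃ n : ℕ, T.par^[n] w = v := h
  set n0 := Nat.find hex with hn0
  have hspec : T.par^[n0] w = v := Nat.find_spec hex
  have hpos : n0 ≠ 0 := by
    intro h0
    rw [h0] at hspec
    exact hne hspec
  refine ⟨T.par^[n0 - 1] w, ?_, ?_, ⟨n0 - 1, rfl⟩⟩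
  · rw [← Function.iterate_succ_apply' T.par (n0 - 1) w,
      Nat.succ_eq_add_one, Nat.sub_add_cancel (Nat.one_le_iff_ne_zero.mpr hpos)]
    exact hspec
  · intro hc
    exact Nat.find_min hex (Nat.sub_lt (Nat.pos_of_ne_zero hpos) one_pos) hc

lemma siblings_disjoint {v c c' w : V} (hc : T.par c = v) (hc' : T.par c' = v)
    (h1 : c ≠ v) (h1' : c' ≠ v) (hne : c ≠ c')
    (ha : T.anc c w) (ha' : T.anc c' w) : False := by
  rcases T.anc_comparable ha ha' with hcc | hcc
  · -- c is an ancestor of c'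
    obtain ⟨k, hk⟩ := hcc
    have hk0 : k ≠ 0 := by
      intro h0; rw [h0] at hk; exact hne hk.symm
    have : T.anc c v := by
      refine ⟨k - 1, ?_⟩
      rw [← hc', ← Function.iterate_succ_apply, Nat.succ_eq_add_one,
        Nat.sub_add_cancel (Nat.one_le_iff_ne_zero.mpr hk0)]
      exact hk
    exact h1 (T.anc_antisymm this ⟨1, by simpa using hc⟩)
  · obtain ⟨k, hk⟩ := hcc
    have hk0 : k ≠ 0 := by
      intro h0; rw [h0] at hk; exact hne hk
    have : T.anc c' v := by
      refine ⟨k - 1, ?_⟩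
      rw [← hc, ← Function.iterate_succ_apply, Nat.succ_eq_add_one,
        Nat.sub_add_cancel (Nat.one_le_iff_ne_zero.mpr hk0)]
      exact hk
    exact h1' (T.anc_antisymm this ⟨1, by simpa using hc'⟩)

lemma exists_two_children {v : V} (hnl : ¬ ∃ x : X, T.leaf x = v) :
    ∃ c c' : V, T.par c = v ∧ c ≠ v ∧ T.par c' = v ∧ c' ≠ v ∧ c ≠ c' := by
  have _hfin := T.fin
  have h2 : 2 ≤ {u : V | T.par u = v ∧ u ≠ v}.ncard := by
    by_cases hr : v = T.root
    · subst hr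
      rcases T.root_deg with h | h
      · exact absurd h hnl
      · exact h
    · exact T.inner_deg v hr hnl
  have : 1 < {u : V | T.par u = v ∧ u ≠ v}.ncard := h2
  rw [Set.one_lt_ncard_iff (Set.toFinite _)] at this
  obtain ⟨a, b, ha, hb, hab⟩ := this
  exact ⟨a, b, ha.1, ha.2, hb.1, hb.2, hab⟩

lemma cluster_inj_aux {u w : V} (hanc : T.anc u w) (hne : w ≠ u)
    (hc : T.cluster u = T.cluster w) : False := by
  have hnl : ¬ ∃ x : X, T.leaf x = u := by
    rintro ⟨x, rfl⟩
    exact hne (T.eq_leaf_of_anc hanc)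
  obtain ⟨c, c', hpc, hcv, hpc', hcv', hcc'⟩ := T.exists_two_children hnl
  obtain ⟨c₀, hpc₀, hc₀v, hc₀w⟩ := T.exists_child_anc hanc hne
  -- pick a child of u different from c₀
  obtain ⟨d, hpd, hdv, hdc₀⟩ : ∃ d : V, T.par d = u ∧ d ≠ u ∧ d ≠ c₀ := by
    by_cases hcc₀ : c = c₀
    · exact ⟨c', hpc', hcv', by rw [← hcc₀]; exact fun h => hcc' h.symm⟩
    · exact ⟨c, hpc, hcv, hcc₀⟩
  obtain ⟨x', hx'⟩ := T.exists_leaf_below d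
  have hx'u : x' ∈ T.cluster u := T.anc_trans ⟨1, by simpa using hpd⟩ hx'
  rw [hc] at hx'u
  have hx'c₀ : T.anc c₀ (T.leaf x') := T.anc_trans hc₀w hx'u
  exact T.siblings_disjoint hpd hpc₀ hdv hc₀v hdc₀ hx' hx'c₀

lemma cluster_inj : Function.Injective T.cluster := by
  intro u w hc
  by_contra hne
  obtain ⟨x, hx⟩ := T.exists_leaf_below u
  have hx' : T.anc w (T.leaf x) := by
    have hxu : x ∈ T.cluster u := hx
    rw [hc] at hxu
    exact hxu
  rcases T.anc_comparable hx hx' with h | h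
  · exact T.cluster_inj_aux h (fun he => hne he.symm) hc
  · exact T.cluster_inj_aux h hne hc.symm

lemma exists_lca (a b : V) : ∃ l : V, T.IsLca l a b := by
  classical
  have hex : ∃ n : ℕ, T.anc (T.par^[n] a) b := by
    obtain ⟨N, hN⟩ := T.reach a
    exact ⟨N, hN ▸ T.anc_root b⟩
  refine ⟨T.par^[Nat.find hex] a, ⟨Nat.find hex, rfl⟩, Nat.find_spec hex, ?_⟩
  intro u hua hub
  obtain ⟨k, hk⟩ := hua
  have hnk : Nat.find hex ≤ k := Nat.find_le (hk ▸ hub)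
  exact ⟨k - Nat.find hex, by
    rw [← Function.iterate_add_apply, Nat.sub_add_cancel hnk, hk]⟩

end PhyloTree


/-- Key lemma: in any tree explaining `ε`, the neighborhood `N_{¬m}[y]` is the cluster of
the highest ancestor `v` of `y` with no `m`-edge on the path down to `y`; moreover if
`v` is not the root then the edge above `v` carries `m`. -/
lemma key_vertex {V X M : Type} {T : PhyloTree V X} {lab : V → Set M} {ε : X → X → Set M}
    (hex : Explains T lab ε) (m : M) (y : X) :
    ∃ v : V, T.cluster v = Nbr ε m y ∧ T.anc v (T.leaf y) ∧
      (∀ u : V, T.edgeOnDown v (T.leaf y) u → m ∉ lab u) ∧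
      (v ≠ T.root → m ∈ lab v) := by
  classical
  set ly := T.leaf y with hly
  obtain ⟨N, hN⟩ := T.reach ly
  set P : ℕ → Prop := fun n => ∀ u : V, T.edgeOnDown (T.par^[n] ly) ly u → m ∉ lab u
    with hP
  have hP0 : P 0 := by
    intro u hu
    exfalso
    apply hu.2.1
    have h1 : T.anc ly u := by simpa using hu.1
    have h2 := T.anc_antisymm hu.2.2 h1
    simpa using h2
  set n0 := Nat.findGreatest P N with hn0
  have hPn0 : P n0 := Nat.findGreatest_spec (Nat.zero_le N) hP0
  set v := T.par^[n0] ly with hv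
  have hanc : T.anc v ly := ⟨n0, rfl⟩
  have hPn0' : ∀ u : V, T.edgeOnDown v ly u → m ∉ lab u := hPn0
  have hlabel : v ≠ T.root → m ∈ lab v := by
    intro hroot
    have hn0N : n0 ≠ N := by
      intro hEq
      apply hroot
      rw [hv, hEq, hN]
    have hn0lt : n0 + 1 ≤ N :=
      Nat.succ_le_of_lt (lt_of_le_of_ne (Nat.findGreatest_le N) hn0N)
    have hnP : ¬ P (n0 + 1) :=
      Nat.findGreatest_is_greatest (Nat.lt_succ_self n0) hn0lt
    simp only [hP] at hnP
    push_neg at hnP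
    obtain ⟨u, hu, hmu⟩ := hnP
    obtain ⟨hau, hune, huy⟩ := hu
    obtain ⟨k, hk⟩ := huy
    rcases le_or_gt k n0 with hkle | hkgt
    · by_cases huv : u = v
      · rw [← huv]; exact hmu
      · exfalso
        refine hPn0' u ⟨⟨n0 - k, ?_⟩, huv, ⟨k, hk⟩⟩ hmu
        rw [← hk, ← Function.iterate_add_apply, Nat.sub_add_cancel hkle]
    · exfalso
      have h1 : T.anc u (T.par^[n0 + 1] ly) := ⟨k - (n0 + 1), by
        rw [← Function.iterate_add_apply, Nat.sub_add_cancel (Nat.succ_le_of_lt hkgt), hk]⟩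
      exact hune (T.anc_antisymm h1 hau)
  have hclus : T.cluster v = Nbr ε m y := by
    apply Set.Subset.antisymm
    · intro x hx
      by_cases hxy : x = y
      · exact Or.inr hxy
      · refine Or.inl ⟨hxy, ?_⟩
        intro hmε
        obtain ⟨l, hl, u, hu, hmu⟩ := (hex x y hxy m).mp hmε
        have hvl : T.anc v l := hl.2.2 v hx hanc
        have hne : u ≠ v := by
          intro hEq
          apply hu.2.1
          rw [hEq]
          exact T.anc_antisymm hvl (hEq ▸ hu.1)
        exact hPn0' u ⟨T.anc_trans hvl hu.1, hne, hu.2.2⟩ hmu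
    · intro x hx
      rcases hx with ⟨hxy, hmε⟩ | hxy
      · obtain ⟨l, hl⟩ := T.exists_lca (T.leaf x) ly
        rcases T.anc_comparable hanc hl.2.1 with hvl | hlv
        · exact T.anc_trans hvl hl.1
        · by_cases hveq : v = l
          · exact T.anc_trans (hveq ▸ T.anc_refl v) hl.1
          · by_cases hvr : v = T.root
            · exact hvr ▸ T.anc_root _
            · exfalso
              exact hmε ((hex x y hxy m).mpr ⟨l, hl, v, ⟨hlv, hveq, hanc⟩, hlabel hvr⟩)
      · have hxy' : x = y := hxy
        subst hxy'
        exact hanc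
  exact ⟨v, hclus, hanc, hPn0', hlabel⟩

/-- Nestedness of complementary neighborhoods for Fitch maps. -/
lemma nbr_nested {X M : Type} {ε : X → X → Set M} (h : IsFitchMap ε)
    {m : M} {y y' : X} (hy' : y' ∈ Nbr ε m y) : Nbr ε m y' ⊆ Nbr ε m y := by
  obtain ⟨V, T, lab, hex⟩ := h
  obtain ⟨v, hcv, hancv, hPv, hlabv⟩ := key_vertex hex m y
  obtain ⟨v', hcv', hancv', hPv', hlabv'⟩ := key_vertex hex m y'
  have hy'v : T.anc v (T.leaf y') := by
    rw [← hcv] at hy'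
    exact hy'
  rcases T.anc_comparable hy'v hancv' with h1 | h1
  · rw [← hcv, ← hcv']
    exact T.cluster_mono h1
  · by_cases hveq : v = v'
    · rw [← hcv, ← hcv', hveq]
    · by_cases hvr : v = T.root
      · rw [← hcv, hvr, T.cluster_root]
        exact Set.subset_univ _
      · exact absurd (hlabv hvr) (hPv' v ⟨h1, hveq, hy'v⟩)

/-- The ε-tree explains `ε`. -/
lemma explains_epsTree {W X M : Type} {ε : X → X → Set M} (h : IsFitchMap ε)
    {That : PhyloTree W X} {labhat : W → Set M} (hhat : IsEpsTree That labhat ε) :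
    Explains That labhat ε := by
  intro x y hxy m
  constructor
  · intro hm
    have hNmem : Nbr ε m y ∈ That.clusterSet := by
      rw [hhat.1]
      exact Or.inl (Or.inl ⟨m, y, rfl⟩)
    obtain ⟨w, hw⟩ := hNmem
    have hyw : That.anc w (That.leaf y) := by
      have h1 : y ∈ Nbr ε m y := Or.inr rfl
      rw [hw] at h1
      exact h1
    have hxN : x ∉ Nbr ε m y := by
      intro hx
      rcases hx with ⟨_, hmn⟩ | hxy'
      · exact hmn hm
      · exact hxy hxy'
    obtain ⟨l, hl⟩ := That.exists_lca (That.leaf x) (That.leaf y)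
    have hwl : ¬ That.anc w l := by
      intro hwl
      apply hxN
      have h1 : x ∈ That.cluster w := That.anc_trans hwl hl.1
      rw [← hw] at h1
      exact h1
    have hlw : That.anc l w := (That.anc_comparable hl.2.1 hyw).resolve_right hwl
    have hwne : w ≠ l := fun he => hwl (he ▸ That.anc_refl w)
    have hwroot : w ≠ That.root := by
      intro hr
      apply hxN
      rw [hw, hr, That.cluster_root]
      trivial
    refine ⟨l, hl, w, ⟨hlw, hwne, hyw⟩, ?_⟩
    rw [hhat.2 w hwroot]
    exact ⟨y, hw.symm⟩
  · rintro ⟨l, hl, u, ⟨hlu, hune, huy⟩, hmu⟩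
    have huroot : u ≠ That.root := by
      intro hr
      exact hune (hr.trans (That.eq_root_of_anc (hr ▸ hlu)).symm)
    rw [hhat.2 u huroot] at hmu
    obtain ⟨y2, hy2⟩ := hmu
    have hyN : y ∈ Nbr ε m y2 := by
      rw [← hy2]
      exact huy
    have hsub := nbr_nested h hyN
    by_contra hmε
    have hxN : x ∈ Nbr ε m y := Or.inl ⟨hxy, hmε⟩
    have hxu : That.anc u (That.leaf x) := by
      have h1 := hsub hxN
      rw [← hy2] at h1
      exact h1
    exact hune (That.anc_antisymm (hl.2.2 u hxu huy) hlu)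

/-- In any explaining tree, a vertex matching a non-root cluster of the ε-tree is
non-root and its label contains the corresponding ε-tree label. -/
lemma labhat_sub {W X M : Type} {ε : X → X → Set M}
    {That : PhyloTree W X} {labhat : W → Set M} (hhat : IsEpsTree That labhat ε)
    {V : Type} {T : PhyloTree V X} {lab : V → Set M} (hex : Explains T lab ε)
    {w : W} (hw : w ≠ That.root) {v : V} (hcv : T.cluster v = That.cluster w) :
    v ≠ T.root ∧ labhat w ⊆ lab v := by
  have hvroot : v ≠ T.root := by
    intro hr
    apply hw
    apply That.cluster_inj
    rw [← hcv, hr, T.cluster_root, That.cluster_root]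
  refine ⟨hvroot, ?_⟩
  intro m hm
  rw [hhat.2 w hw] at hm
  obtain ⟨y, hy⟩ := hm
  obtain ⟨u, hcu, _, _, hlabu⟩ := key_vertex hex m y
  have huv : u = v := T.cluster_inj (by rw [hcu, ← hy, hcv])
  subst huv
  exact hlabu hvroot

/-- The cluster set of the ε-tree is contained in that of any explaining tree. -/
lemma clusterSet_hat_subset {W X M : Type} {ε : X → X → Set M}
    {That : PhyloTree W X} {labhat : W → Set M} (hhat : IsEpsTree That labhat ε)
    {V : Type} {T : PhyloTree V X} {lab : V → Set M} (hex : Explains T lab ε) :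
    That.clusterSet ⊆ T.clusterSet := by
  rw [hhat.1]
  rintro S ((⟨m, y, rfl⟩ | hS) | ⟨x, rfl⟩)
  · obtain ⟨v, hcv, _, _, _⟩ := key_vertex hex m y
    exact ⟨v, hcv.symm⟩
  · have hS' : S = Set.univ := hS
    exact ⟨T.root, by rw [hS', T.cluster_root]⟩
  · exact ⟨T.leaf x, (T.cluster_leaf x).symm⟩

/-- the ε-tree is the unique (up to isomorphism) least-resolved tree
explaining a Fitch map `ε`; it has the minimum number of vertices and minimizes the
total edge-label size. -/
theorem epsTree_unique_least_resolved {W X M : Type}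
    [Fintype X] [Fintype M] [Nonempty X] [Nonempty M]
    (ε : X → X → Set M) (h : IsFitchMap ε)
    (That : PhyloTree W X) (labhat : W → Set M) (hhat : IsEpsTree That labhat ε) :
    LeastResolved That labhat ε ∧
    (∀ (V : Type) (Tstar : PhyloTree V X) (labstar : V → Set M),
      LeastResolved Tstar labstar ε → Isomorphic Tstar labstar That labhat) ∧
    (∀ (V : Type) (T : PhyloTree V X) (lab : V → Set M), Explains T lab ε →
      Nat.card W ≤ Nat.card V ∧ edgeLabelSum That labhat ≤ edgeLabelSum T lab) := by
  classical
  have hexhat : Explains That labhat ε := explains_epsTree h hhat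
  have hLR : LeastResolved That labhat ε := by
    refine ⟨hexhat, ?_⟩
    intro V' T' lab' hstrict hex'
    obtain ⟨⟨hsub, hlab⟩, hne⟩ := hstrict
    have hsup : That.clusterSet ⊆ T'.clusterSet := clusterSet_hat_subset hhat hex'
    rcases hne with hss | ⟨v', hv', v, hv, hcl, hlt⟩
    · exact hss.2 hsup
    · exact hlt.2 (labhat_sub hhat hex' hv hcl).2
  refine ⟨hLR, ?_, ?_⟩
  · intro V Tstar labstar hls
    have hexs := hls.1
    have hsub : That.clusterSet ⊆ Tstar.clusterSet := clusterSet_hat_subset hhat hexs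
    have hCG : CoarseGraining That labhat Tstar labstar := by
      refine ⟨hsub, ?_⟩
      intro w hw v hv hc
      exact (labhat_sub hhat hexs hw hc.symm).2
    have hnot : ¬ (That.clusterSet ⊂ Tstar.clusterSet ∨
        ∃ w : W, w ≠ That.root ∧ ∃ v : V, v ≠ Tstar.root ∧
          That.cluster w = Tstar.cluster v ∧ labhat w ⊂ labstar v) :=
      fun hAB => hls.2 W That labhat ⟨hCG, hAB⟩ hexhat
    have hcseq : That.clusterSet = Tstar.clusterSet := by
      by_contra hnee
      exact hnot (Or.inl (ssubset_of_subset_of_ne hsub hnee))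
    refine ⟨⟨hcseq.symm.subset, ?_⟩, hCG⟩
    intro v hv w hw hc
    have h1 : labhat w ⊆ labstar v := (labhat_sub hhat hexs hw hc).2
    have h2 : ¬ labhat w ⊂ labstar v :=
      fun hss => hnot (Or.inr ⟨w, hw, v, hv, hc.symm, hss⟩)
    have heq : labhat w = labstar v := by
      by_contra hne
      exact h2 (ssubset_of_subset_of_ne h1 hne)
    rw [← heq]
  · intro V T lab hex
    have hfinV := T.fin
    have hfinW := That.fin
    have hsub : That.clusterSet ⊆ T.clusterSet := clusterSet_hat_subset hhat hex
    have hexv : ∀ w : W, ∃ v : V, T.cluster v = That.cluster w := by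
      intro w
      obtain ⟨v, hv⟩ := hsub ⟨w, rfl⟩
      exact ⟨v, hv.symm⟩
    choose f hf using hexv
    have hfi : Function.Injective f := by
      intro a b hab
      apply That.cluster_inj
      rw [← hf a, ← hf b, hab]
    constructor
    · exact Nat.card_le_card_of_injective f hfi
    · have hfroot : ∀ w : W, w ≠ That.root → f w ≠ T.root := by
        intro w hw hr
        apply hw
        apply That.cluster_inj
        rw [← hf w, hr, T.cluster_root, That.cluster_root]
      have hlabsub : ∀ w : W, w ≠ That.root → labhat w ⊆ lab (f w) :=
        fun w hw => (labhat_sub hhat hex hw (hf w)).2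
      haveI := Fintype.ofFinite V
      haveI := Fintype.ofFinite W
      have hsetW : {w : W | w ≠ That.root}
          = ↑(Finset.filter (fun w => w ≠ That.root) Finset.univ) := by
        ext w; simp
      have hsetV : {v : V | v ≠ T.root}
          = ↑(Finset.filter (fun v => v ≠ T.root) Finset.univ) := by
        ext v; simp
      rw [edgeLabelSum, edgeLabelSum, hsetW, hsetV, finsum_mem_coe_finset,
        finsum_mem_coe_finset]
      calc ∑ w ∈ Finset.filter (fun w => w ≠ That.root) Finset.univ, (labhat w).ncard
          ≤ ∑ w ∈ Finset.filter (fun w => w ≠ That.root) Finset.univ,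
              (lab (f w)).ncard := by
            apply Finset.sum_le_sum
            intro w hw
            rw [Finset.mem_filter] at hw
            exact Set.ncard_le_ncard (hlabsub w hw.2) (Set.toFinite _)
        _ = ∑ v ∈ (Finset.filter (fun w => w ≠ That.root) Finset.univ).image f,
              (lab v).ncard := by
            rw [Finset.sum_image (fun a _ b _ hab => hfi hab)]
        _ ≤ ∑ v ∈ Finset.filter (fun v => v ≠ T.root) Finset.univ, (lab v).ncard := by
            apply Finset.sum_le_sum_of_subset
            intro v hv
            rw [Finset.mem_image] at hv
            obtain ⟨w, hw, rfl⟩ := hv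
            rw [Finset.mem_filter] at hw ⊢
            exact ⟨Finset.mem_univ _, hfroot w hw.2⟩
end

section
/- Let ε : X×X∖Δ → P(M) be a Fitch map explained by (T,λ), and let P = {M_1,…,M_k} be a collection of subsets of M. Define ε_P(x,y) = { i ∈ {1,…,k} : ε(x,y) ∩ M_i ≠ ∅ } and λ_P(e) = { i : λ(e) ∩ M_i ≠ ∅ }. Then ε_P is a Fitch map explained by (T, λ_P). -/
/-- the `P`-recolored map of a Fitch map is a Fitch map, explained by
the same tree with the `P`-recolored labeling. -/
theorem recolored_fitch {V X M : Type} [Fintype X] [Fintype M] [Nonempty X] [Nonempty M]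
    (ε : X → X → Set M) (T : PhyloTree V X) (lab : V → Set M)
    (hexp : Explains T lab ε) (k : ℕ) (P : Fin k → Set M) :
    Explains T (fun v => {i : Fin k | (lab v ∩ P i).Nonempty})
      (fun x y => {i : Fin k | (ε x y ∩ P i).Nonempty}) ∧
    IsFitchMap (fun x y => {i : Fin k | (ε x y ∩ P i).Nonempty}) := by
  have hE : Explains T (fun v => {i : Fin k | (lab v ∩ P i).Nonempty})
      (fun x y => {i : Fin k | (ε x y ∩ P i).Nonempty}) := by
    intro x y hxy i
    constructor
    · rintro ⟨m, hmε, hmP⟩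
      obtain ⟨l, hl, u, hu, hm⟩ := (hexp x y hxy m).1 hmε
      exact ⟨l, hl, u, hu, m, hm, hmP⟩
    · rintro ⟨l, hl, u, hu, m, hm, hmP⟩
      exact ⟨m, (hexp x y hxy m).2 ⟨l, hl, u, hu, hm⟩, hmP⟩
  exact ⟨hE, V, T, _, hE⟩
end

section
/- Let C ⊆ P(X) be a finite collection of subsets of a finite set X. The following greedy procedure correctly decides whether C is hierarchy-like: order C as C_1,…,C_n by non-increasing cardinality; maintain φ : X → {0,…,n} initialized to 0; for each i, pick x ∈ C_i, set j = φ(x), and check that φ(y) = j for all y ∈ C_i (updating φ(y) := i); C is hierarchy-like if and only if no check fails. Equivalently: with the sets processed in non-increasing size order, the procedure reports failure at some step i iff there exist C_i, C_j ∈ C with C_i ∩ C_j ∉ {∅, C_i, C_j}. -/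
open Classical in
/-- With the sets `C 0, …, C (n-1)` processed in this order, `lastIdx C i z` is the
value `φ(z)` just before step `i`: the (1-shifted) index of the last set among
`C 0, …, C (i-1)` containing `z`, and `0` if there is none. -/
noncomputable def lastIdx {X : Type} {n : ℕ} (C : Fin n → Set X) (i : Fin n) (z : X) : ℕ :=
  (Finset.univ.filter (fun j : Fin n => j < i ∧ z ∈ C j)).sup (fun j => (j : ℕ) + 1)


lemma lastIdx_le {X : Type} {n : ℕ} (C : Fin n → Set X) {i j : Fin n} {x : X}
    (hj : j < i) (hx : x ∈ C j) : (j : ℕ) + 1 ≤ lastIdx C i x := by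
  classical
  unfold lastIdx
  have hmem : j ∈ Finset.univ.filter (fun j : Fin n => j < i ∧ x ∈ C j) := by
    rw [Finset.mem_filter]; exact ⟨Finset.mem_univ _, hj, hx⟩
  exact Finset.le_sup (f := fun j : Fin n => (j : ℕ) + 1) hmem

lemma lastIdx_attained {X : Type} {n : ℕ} (C : Fin n → Set X) (i : Fin n) (x : X)
    (h : lastIdx C i x ≠ 0) :
    ∃ k : Fin n, k < i ∧ x ∈ C k ∧ (k : ℕ) + 1 = lastIdx C i x := by
  classical
  have hne : (Finset.univ.filter (fun j : Fin n => j < i ∧ x ∈ C j)).Nonempty := by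
    by_contra hcon
    rw [Finset.not_nonempty_iff_eq_empty] at hcon
    apply h
    unfold lastIdx
    rw [hcon, Finset.sup_empty]; rfl
  obtain ⟨k, hk, hsup⟩ := Finset.exists_mem_eq_sup _ hne (fun j : Fin n => (j : ℕ) + 1)
  simp only [Finset.mem_filter] at hk
  exact ⟨k, hk.2.1, hk.2.2, hsup.symm⟩

lemma greedy_key {X : Type} {n : ℕ} (C : Fin n → Set X)
    (H : ∀ i : Fin n, ∀ x ∈ C i, ∀ y ∈ C i, lastIdx C i x = lastIdx C i y) :
    ∀ i j : Fin n, j < i → (C i ∩ C j).Nonempty → C i ⊆ C j := by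
  suffices h : ∀ N : ℕ, ∀ i j : Fin n, (i : ℕ) = N → j < i → (C i ∩ C j).Nonempty → C i ⊆ C j by
    intro i j; exact h i i j rfl
  intro N
  induction N using Nat.strong_induction_on with
  | _ N ih =>
    rintro i j hiN hji ⟨x, hxi, hxj⟩
    have hL : (j : ℕ) + 1 ≤ lastIdx C i x := lastIdx_le C hji hxj
    have hL0 : lastIdx C i x ≠ 0 := by omega
    obtain ⟨k, hki, hxk, hk1⟩ := lastIdx_attained C i x hL0
    have hsubk : C i ⊆ C k := by
      intro y hy
      have hxy : lastIdx C i y = lastIdx C i x := H i y hy x hxi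
      have hy0 : lastIdx C i y ≠ 0 := by omega
      obtain ⟨k', hk'i, hyk', hk'1⟩ := lastIdx_attained C i y hy0
      have : k' = k := by
        apply Fin.ext; omega
      rwa [this] at hyk'
    have hjk : j ≤ k := by
      have : (j : ℕ) ≤ (k : ℕ) := by omega
      exact Fin.le_def.mpr this
    rcases eq_or_lt_of_le hjk with heq | hlt
    · rwa [← heq] at hsubk
    · have hkN : (k : ℕ) < N := by
        have := Fin.lt_def.mp hki; omega
      have hsub2 : C k ⊆ C j := ih (k : ℕ) hkN k j rfl hlt ⟨x, hxk, hxj⟩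
      exact hsubk.trans hsub2

/-- correctness of the greedy hierarchy-like test: with the (pairwise
distinct, nonempty) sets processed in non-increasing size order, the collection is
hierarchy-like iff no step `i` finds two elements of `C i` with different `φ`-values. -/
theorem greedy_hierarchy_test {X : Type} [Fintype X] {n : ℕ} (C : Fin n → Set X)
    (hinj : Function.Injective C)
    (hne : ∀ i : Fin n, (C i).Nonempty)
    (hsorted : ∀ i j : Fin n, i ≤ j → (C j).ncard ≤ (C i).ncard) :
    HLike (Set.range C) ↔
      ¬ ∃ i : Fin n, ∃ x ∈ C i, ∃ y ∈ C i, lastIdx C i x ≠ lastIdx C i y := by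
  classical
  constructor
  · intro hH
    rintro ⟨i, x, hxi, y, hyi, hne'⟩
    apply hne'
    have sub : ∀ (a b : X), a ∈ C i → b ∈ C i → ∀ j : Fin n, j < i → a ∈ C j → b ∈ C j := by
      intro a b ha hb j hj haj
      rcases hH (C j) ⟨j, rfl⟩ (C i) ⟨i, rfl⟩ with h1 | h1 | h1
      · have hsub : C j ⊆ C i := by rw [← h1]; exact Set.inter_subset_right
        have hcard : (C i).ncard ≤ (C j).ncard := hsorted j i hj.le
        have : C j = C i := Set.eq_of_subset_of_ncard_le hsub hcard (Set.toFinite _)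
        exact absurd (hinj this) hj.ne
      · have hsub : C i ⊆ C j := by rw [← h1]; exact Set.inter_subset_left
        exact hsub hb
      · exact absurd h1 (Set.nonempty_iff_ne_empty.mp ⟨a, haj, ha⟩)
    unfold lastIdx
    congr 1
    ext j
    simp only [Finset.mem_filter, Finset.mem_univ, true_and]
    constructor
    · rintro ⟨hj, hx⟩; exact ⟨hj, sub x y hxi hyi j hj hx⟩
    · rintro ⟨hj, hy⟩; exact ⟨hj, sub y x hyi hxi j hj hy⟩
  · intro hno
    have H : ∀ i : Fin n, ∀ x ∈ C i, ∀ y ∈ C i, lastIdx C i x = lastIdx C i y := by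
      intro i x hx y hy
      by_contra hc
      exact hno ⟨i, x, hx, y, hy, hc⟩
    have key := greedy_key C H
    rintro P ⟨a, rfl⟩ Q ⟨b, rfl⟩
    rcases eq_or_ne (C a ∩ C b) ∅ with he | he
    · exact Or.inr (Or.inr he)
    have hne2 : (C a ∩ C b).Nonempty := Set.nonempty_iff_ne_empty.mpr he
    rcases lt_trichotomy a b with h | h | h
    · have hsub : C b ⊆ C a := key b a h (by rwa [Set.inter_comm] at hne2)
      exact Or.inr (Or.inl (Set.inter_eq_right.mpr hsub))
    · rw [h]; exact Or.inl (Set.inter_self _)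
    · have hsub : C a ⊆ C b := key a b h hne2
      exact Or.inl (Set.inter_eq_left.mpr hsub)
end
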